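/- arXiv:1211.3989 — 3 statements merged into one kernel-verified Lean document; each statement's English description precedes it below -/
import Mathlib

section
/- (Chang's covering argument.) There is an absolute constant c > 0 such that the following holds. Let G be a group, let K ≥ 2, and suppose that A ⊆ G is a K-approximate group. Let M be a positive integer and M' ≥ 1 a real number, and let B ⊆ A^M be a finite set with |B| ≥ |A|/M'. Then there exist a positive integer t ≤ c(log M' + M log K) and sets S₁,…,S_t ⊆ A with |Sᵢ| ≤ 2K for each i, such that A ⊆ S_{t−1}⁻¹⋯S₁⁻¹B⁻¹BS₁⋯S_t. -/
open Pointwise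

/-!
Let `n = ⌊2K⌋ ≥ 3K/2`. Starting from `C₀ = B`, choose greedily `n`-element sets `Sⱼ₊₁ ⊆ A` whose
right translates `Cⱼ s`, `s ∈ Sⱼ₊₁`, are pairwise disjoint, and put `Cⱼ₊₁ = Cⱼ Sⱼ₊₁`. Then
`nʲ |B| ≤ |Cⱼ| ≤ |A^(M+j)| ≤ K^(M+j) |A| ≤ K^(M+j) M' |B|`, so `(3/2)ʲ ≤ K^M M'` and the process
stops after `j ≤ 3 (log M' + M log K)` steps. When it stops, a maximal `S ⊆ A` with pairwise
disjoint translates `Cⱼ s` has fewer than `n` elements, and maximality gives `A ⊆ Cⱼ⁻¹ Cⱼ S`.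
-/

/-- A finite subset `A` of a group is a `K`-approximate group if it is symmetric,
contains the identity, and `A² ⊆ XA` for some symmetric set `X` with `|X| ≤ K`. -/
def IsApproxGroup {G : Type*} [Group G] (A : Set G) (K : ℝ) : Prop :=
  A.Finite ∧ A⁻¹ = A ∧ (1 : G) ∈ A ∧
    ∃ X : Set G, X.Finite ∧ X⁻¹ = X ∧ (X.ncard : ℝ) ≤ K ∧ A * A ⊆ X * A

theorem List.prod_map_inv_reverse {ι α : Type*} [DivisionMonoid α] (f : ι → α) :
    ∀ L : List ι, (L.reverse.map fun i => (f i)⁻¹).prod = (L.map f).prod⁻¹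
  | [] => by simp
  | a :: L => by
    rw [List.reverse_cons, List.map_append, List.prod_append, List.prod_map_inv_reverse f L]
    simp [mul_inv_rev]

theorem List.map_range_getD {α : Type*} (L : List α) (d : α) {k : ℕ} (hk : k ≤ L.length) :
    (List.range k).map (L.getD · d) = L.take k := by
  apply List.ext_getElem (by simpa using hk)
  intro i hi _
  simp only [List.getElem_map, List.getElem_range, List.getElem_take]
  exact L.getD_eq_getElem d (by simp at hi; omega)

namespace Set

theorem Finite.pow {M : Type*} [Monoid M] {s : Set M} (hs : s.Finite) : ∀ n : ℕ, (s ^ n).Finite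
  | 0 => by simp
  | n + 1 => by rw [pow_succ]; exact (hs.pow n).mul hs

variable {G : Type*} [Group G]

theorem ncard_mul_of_pairwiseDisjoint {C S : Set G} (h : S.PairwiseDisjoint fun s => C * {s}) :
    (C * S).ncard = C.ncard * S.ncard := by
  have hinj : (C ×ˢ S).InjOn fun p => p.1 * p.2 := by
    simp_rw [mul_singleton] at h
    exact (pairwiseDisjoint_image_left_iff fun b _ => mul_left_injective b).1 h
  rw [← image2_mul, ← image_prod, hinj.ncard_image, ncard_prod]

theorem Finite.exists_pairwiseDisjoint_cover {A C : Set G} (hA : A.Finite) (hC : C.Nonempty) :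
    ∃ S ⊆ A, S.PairwiseDisjoint (fun s => C * {s}) ∧ A ⊆ C⁻¹ * C * S := by
  have hfin : {S | S ⊆ A ∧ S.PairwiseDisjoint fun s => C * {s}}.Finite :=
    hA.finite_subsets.subset fun _ hS => hS.1
  obtain ⟨S, ⟨hSA, hS⟩, hmax⟩ := hfin.exists_maximal ⟨∅, empty_subset A, pairwiseDisjoint_empty⟩
  refine ⟨S, hSA, hS, fun a ha => ?_⟩
  by_cases haS : a ∈ S
  · obtain ⟨c, hc⟩ := hC
    exact ⟨c⁻¹ * c, mul_mem_mul (inv_mem_inv.2 hc) hc, a, haS, by simp⟩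
  · have : ¬ ∀ b ∈ S, a ≠ b → Disjoint (C * {a}) (C * {b}) := fun h =>
      haS (hmax ⟨insert_subset ha hSA, hS.insert h⟩ (subset_insert a S) (mem_insert a S))
    push Not at this
    obtain ⟨b, hb, -, hab⟩ := this
    obtain ⟨x, hxa, hxb⟩ := not_disjoint_iff.1 hab
    simp only [mul_singleton, mem_image] at hxa hxb
    obtain ⟨c₁, hc₁, rfl⟩ := hxa
    obtain ⟨c₂, hc₂, hx⟩ := hxb
    exact ⟨c₁⁻¹ * c₂, mul_mem_mul (inv_mem_inv.2 hc₁) hc₂, b, hb, by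
      simp only [mul_assoc, hx, inv_mul_cancel_left]⟩

end Set

theorem le_three_mul_log_of_floor_pow_le {K M' : ℝ} {M j : ℕ} (hK : 2 ≤ K) (hM' : 0 < M')
    (h : (⌊2 * K⌋₊ : ℝ) ^ j ≤ K ^ (M + j) * M') :
    (j : ℝ) ≤ 3 * (Real.log M' + M * Real.log K) := by
  have hK0 : 0 < K := by linarith
  have hfloor : 3 / 2 * K ≤ ⌊2 * K⌋₊ := by linarith [Nat.sub_one_lt_floor (2 * K)]
  have hpow : (3 / 2 : ℝ) ^ j ≤ K ^ M * M' := by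
    have : (3 / 2 : ℝ) ^ j * K ^ j ≤ K ^ M * M' * K ^ j := calc
      (3 / 2 : ℝ) ^ j * K ^ j = (3 / 2 * K) ^ j := (mul_pow _ _ _).symm
      _ ≤ (⌊2 * K⌋₊ : ℝ) ^ j := by gcongr
      _ ≤ K ^ M * M' * K ^ j := by rw [pow_add] at h; linarith
    exact le_of_mul_le_mul_right this (by positivity)
  have hlog : j * Real.log (3 / 2) ≤ M * Real.log K + Real.log M' := by
    simpa [Real.log_mul, Real.log_pow, hK0.ne', hM'.ne'] using
      Real.log_le_log (by positivity) hpow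
  have hlog32 : 1 / 3 ≤ Real.log (3 / 2) := by
    linarith [Real.one_sub_inv_le_log_of_pos (x := 3 / 2) (by norm_num)]
  nlinarith

section ApproxGroup

variable {G : Type*} [Group G] {A : Set G} {K : ℝ}

theorem IsApproxGroup.isApproximateSubgroup (hA : IsApproxGroup A K) :
    IsApproximateSubgroup K A := by
  obtain ⟨-, hinv, hone, X, hX, -, hXK, hAX⟩ := hA
  refine ⟨hone, hinv, hX.toFinset, by rwa [← Set.ncard_eq_toFinset_card _ hX], ?_⟩
  simpa [sq] using hAX

theorem IsApproxGroup.ncard_pow_le (hA : IsApproxGroup A K) (n : ℕ) :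
    ((A ^ n).ncard : ℝ) ≤ K ^ (n - 1) * A.ncard := by
  classical
  have hAK := hA.isApproximateSubgroup
  lift A to Finset G using hA.1
  simpa [← Finset.coe_pow, Set.ncard_coe_finset] using hAK.card_pow_le

end ApproxGroup

section Chain

variable {G : Type*} [Group G] {A B T : Set G} {n : ℕ} {L : List (Set G)}

def IsExpandingChain (A B : Set G) (n : ℕ) (L : List (Set G)) : Prop :=
  (∀ T ∈ L, T ⊆ A ∧ T.ncard = n) ∧ n ^ L.length * B.ncard ≤ (B * L.prod).ncard

theorem isExpandingChain_nil : IsExpandingChain A B n [] := by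
  simp [IsExpandingChain]

theorem IsExpandingChain.concat (hL : IsExpandingChain A B n L) (hTA : T ⊆ A) (hT : T.ncard = n)
    (hdisj : T.PairwiseDisjoint fun t => B * L.prod * {t}) :
    IsExpandingChain A B n (L ++ [T]) := by
  refine ⟨fun S hS => ?_, ?_⟩
  · rcases List.mem_append.1 hS with hS | hS
    · exact hL.1 S hS
    · rw [List.mem_singleton.1 hS]
      exact ⟨hTA, hT⟩
  · rw [List.prod_append, List.prod_singleton, List.length_append, List.length_singleton,
      ← mul_assoc, Set.ncard_mul_of_pairwiseDisjoint hdisj, hT, pow_succ]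
    calc n ^ L.length * n * B.ncard = n ^ L.length * B.ncard * n := by ring
      _ ≤ (B * L.prod).ncard * n := Nat.mul_le_mul_right n hL.2

theorem IsExpandingChain.mul_prod_subset {M : ℕ} (hL : IsExpandingChain A B n L)
    (hBA : B ⊆ A ^ M) : B * L.prod ⊆ A ^ (M + L.length) := by
  rw [pow_add]
  exact Set.mul_subset_mul hBA (List.prod_le_pow_card L A fun T hT => (hL.1 T hT).1)

theorem IsExpandingChain.pow_le {K M' : ℝ} {M : ℕ} (hL : IsExpandingChain A B n L)
    (hA : IsApproxGroup A K) (hK : 1 ≤ K) (hBA : B ⊆ A ^ M) (hB : 0 < B.ncard)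
    (hAB : (A.ncard : ℝ) ≤ M' * B.ncard) : (n : ℝ) ^ L.length ≤ K ^ (M + L.length) * M' := by
  have hgrowth : (n : ℝ) ^ L.length * B.ncard ≤ K ^ (M + L.length) * M' * B.ncard := calc
    (n : ℝ) ^ L.length * B.ncard ≤ (B * L.prod).ncard := by exact_mod_cast hL.2
    _ ≤ (A ^ (M + L.length)).ncard := by
      exact_mod_cast Set.ncard_le_ncard (hL.mul_prod_subset hBA) (Set.Finite.pow hA.1 _)
    _ ≤ K ^ (M + L.length - 1) * A.ncard := hA.ncard_pow_le _
    _ ≤ K ^ (M + L.length) * (M' * B.ncard) := by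
      gcongr
      exact Nat.sub_le _ _
    _ = K ^ (M + L.length) * M' * B.ncard := by ring
  exact le_of_mul_le_mul_right hgrowth (by exact_mod_cast hB)

theorem IsApproxGroup.exists_cover {K M' : ℝ} {M : ℕ} (hA : IsApproxGroup A K)
    (hK : 2 ≤ K) (hM' : 0 < M') (hBA : B ⊆ A ^ M) (hB : 0 < B.ncard)
    (hAB : (A.ncard : ℝ) ≤ M' * B.ncard) :
    ∃ (L : List (Set G)) (T : Set G),
      (L.length : ℝ) ≤ 3 * (Real.log M' + M * Real.log K) ∧
      (∀ S ∈ L ++ [T], S ⊆ A ∧ (S.ncard : ℝ) ≤ 2 * K) ∧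
      A ⊆ L.prod⁻¹ * B⁻¹ * B * (L ++ [T]).prod := by
  set n := ⌊2 * K⌋₊
  have hn : 1 ≤ n := Nat.le_floor (by push_cast; linarith)
  have hlen : ∀ L, IsExpandingChain A B n L →
      (L.length : ℝ) ≤ 3 * (Real.log M' + M * Real.log K) := fun L hL =>
    le_three_mul_log_of_floor_pow_le hK hM' (hL.pow_le hA (by linarith) hBA hB hAB)
  have hfin : (List.length '' {L | IsExpandingChain A B n L}).Finite :=
    (Set.finite_Iic ⌊3 * (Real.log M' + M * Real.log K)⌋₊).subset <| by
      rintro _ ⟨L, hL, rfl⟩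
      exact Nat.le_floor (hlen L hL)
  obtain ⟨L, hL, hmax⟩ := Set.Finite.exists_maximalFor' _ _ hfin ⟨[], isExpandingChain_nil⟩
  have hC : (B * L.prod).Nonempty := by
    refine Set.nonempty_of_ncard_ne_zero (ne_of_gt (lt_of_lt_of_le ?_ hL.2))
    exact Nat.mul_pos (Nat.pow_pos hn) hB
  obtain ⟨S, hSA, hS, hAS⟩ := Set.Finite.exists_pairwiseDisjoint_cover hA.1 hC
  -- otherwise an `n`-element subset of `S` would extend the longest chain `L`
  have hSn : S.ncard < n := by
    by_contra! h
    obtain ⟨T, hTS, hT⟩ := Set.exists_subset_card_eq h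
    have := hmax (hL.concat (hTS.trans hSA) hT (hS.subset hTS)) (by simp)
    simp at this
  have hn2K : (n : ℝ) ≤ 2 * K := Nat.floor_le (by linarith)
  refine ⟨L, S, hlen L hL, fun T hT => ?_, ?_⟩
  · rcases List.mem_append.1 hT with hT | hT
    · obtain ⟨hTA, hTn⟩ := hL.1 T hT
      exact ⟨hTA, by rw [hTn]; exact hn2K⟩
    · rw [List.mem_singleton.1 hT]
      exact ⟨hSA, le_trans (by exact_mod_cast hSn.le) hn2K⟩
  · simpa [List.prod_append, mul_inv_rev, mul_assoc] using hAS

end Chain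

theorem chang_covering :
    ∃ c : ℝ, 0 < c ∧
      ∀ (G : Type*) [Group G], ∀ K : ℝ, 2 ≤ K → ∀ A : Set G, IsApproxGroup A K →
        ∀ M : ℕ, 0 < M → ∀ M' : ℝ, 1 ≤ M' →
          ∀ B : Set G, B.Finite → B ⊆ A ^ M → (A.ncard : ℝ) / M' ≤ (B.ncard : ℝ) →
            ∃ (t : ℕ) (S : ℕ → Set G),
              0 < t ∧ (t : ℝ) ≤ c * (Real.log M' + M * Real.log K) ∧
              (∀ i, 1 ≤ i → i ≤ t → S i ⊆ A ∧ ((S i).ncard : ℝ) ≤ 2 * K) ∧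
              A ⊆ (((List.range (t - 1)).reverse.map fun i => (S (i + 1))⁻¹).prod) *
                    B⁻¹ * B * (((List.range t).map fun i => S (i + 1)).prod) := by
  refine ⟨5, by norm_num, fun G _ K hK A hA M hM M' hM' B _ hBA hAB => ?_⟩
  have hM'0 : 0 < M' := by linarith
  have hA0 : (0 : ℝ) < A.ncard := by
    exact_mod_cast (Set.ncard_pos hA.1).2 hA.isApproximateSubgroup.nonempty
  have hB : 0 < B.ncard := by exact_mod_cast (div_pos hA0 hM'0).trans_le hAB
  obtain ⟨L, T, hlen, hsub, hcov⟩ :=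
    hA.exists_cover hK hM'0 hBA hB (by rwa [div_le_iff₀ hM'0, mul_comm] at hAB)
  refine ⟨(L ++ [T]).length, fun i => (L ++ [T]).getD (i - 1) ∅, by simp, ?_, ?_, ?_⟩
  · have hlog : 1 / 2 ≤ Real.log M' + M * Real.log K := by
      have hlogK : Real.log 2 ≤ Real.log K := Real.log_le_log (by norm_num) hK
      have hM1 : (1 : ℝ) ≤ M := by exact_mod_cast hM
      nlinarith [Real.log_nonneg hM', Real.log_two_gt_d9]
    simp only [List.length_append, List.length_singleton, Nat.cast_add, Nat.cast_one]
    linarith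
  · intro i hi hit
    dsimp only
    rw [List.getD_eq_getElem _ _ (by omega)]
    exact hsub _ (List.getElem_mem _)
  · rw [List.prod_map_inv_reverse fun i => (L ++ [T]).getD (i + 1 - 1) ∅]
    simp only [Nat.add_sub_cancel]
    rw [List.map_range_getD _ _ le_rfl, List.take_length,
      List.map_range_getD _ _ (Nat.sub_le _ _)]
    simpa using hcov
end

section
/- Let G be a group with a subgroup H, let K ≥ 1, and suppose that A ⊆ G is a K-approximate group. Then for each integer m ≥ 2: (i) A^m ∩ H is a 2K^{2m−1}-approximate group; and (ii) A^m ∩ H can be covered by at most K^{m−1} left-translates of A² ∩ H, i.e. there is a set Z ⊆ G with |Z| ≤ K^{m−1} such that A^m ∩ H ⊆ Z(A² ∩ H). -/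
open Pointwise

private lemma set_pow_finite {G : Type*} [Group G] {A : Set G} (hA : A.Finite) :
    ∀ n : ℕ, (A ^ n).Finite
  | 0 => by simp
  | n + 1 => by rw [pow_succ]; exact (set_pow_finite hA n).mul hA

private lemma set_ncard_pow_le {G : Type*} [Group G] {A : Set G} :
    ∀ n : ℕ, (A ^ n).ncard ≤ A.ncard ^ n
  | 0 => by rw [pow_zero, pow_zero, ← Set.singleton_one]; exact (Set.ncard_singleton 1).le
  | n + 1 => by
    rw [pow_succ, pow_succ]
    exact (Set.natCard_mul_le).trans (Nat.mul_le_mul_right _ (set_ncard_pow_le n))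

/-- Covering lemma: if `A^n ⊆ W * A` then `A^n ∩ H` is covered by at most `|W|`
left translates (from `A^n ∩ H`) of `A² ∩ H`. -/
private lemma cover_lemma {G : Type*} [Group G] (H : Subgroup G) {A W : Set G}
    (hW : W.Finite) (hAsymm : A⁻¹ = A) (n : ℕ) (hsub : A ^ n ⊆ W * A) :
    ∃ Z : Set G, Z.Finite ∧ Z.ncard ≤ W.ncard ∧ Z ⊆ A ^ n ∩ (H : Set G) ∧
      A ^ n ∩ (H : Set G) ⊆ Z * (A ^ 2 ∩ (H : Set G)) := by
  classical
  set P : G → Prop := fun w => ∃ g, g ∈ A ^ n ∩ (H : Set G) ∧ ∃ a ∈ A, w * a = g with hP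
  set f : G → G := fun w => if h : P w then h.choose else 1 with hf
  refine ⟨f '' {w ∈ W | P w}, (hW.subset (Set.sep_subset _ _)).image f, ?_, ?_, ?_⟩
  · exact (Set.ncard_image_le (hW.subset (Set.sep_subset _ _))).trans
      (Set.ncard_le_ncard (Set.sep_subset _ _) hW)
  · rintro z ⟨w, hw, rfl⟩
    have hPw : P w := hw.2
    simp only [hf, dif_pos hPw]
    exact hPw.choose_spec.1
  · rintro g ⟨hgA, hgH⟩
    obtain ⟨w, hwW, a, haA, hwa⟩ := hsub hgA
    have hPw : P w := ⟨g, ⟨hgA, hgH⟩, a, haA, hwa⟩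
    set z := f w with hz
    have hzspec : z ∈ A ^ n ∩ (H : Set G) ∧ ∃ b ∈ A, w * b = z := by
      simp only [hz, hf, dif_pos hPw]; exact hPw.choose_spec
    obtain ⟨⟨hzA, hzH⟩, b, hbA, hwb⟩ := hzspec
    refine ⟨z, ⟨w, ⟨hwW, hPw⟩, rfl⟩, z⁻¹ * g, ⟨?_, ?_⟩, by group⟩
    · have : z⁻¹ * g = b⁻¹ * a := by rw [← hwb, ← hwa]; group
      rw [this, sq]
      exact Set.mul_mem_mul (by rw [← hAsymm]; exact Set.inv_mem_inv.2 hbA) haA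
    · exact mul_mem (inv_mem hzH) hgH

theorem approx_group_inter_subgroup {G : Type*} [Group G] (H : Subgroup G)
    (K : ℝ) (hK : 1 ≤ K) (A : Set G) (hA : IsApproxGroup A K) (m : ℕ) (hm : 2 ≤ m) :
    IsApproxGroup (A ^ m ∩ (H : Set G)) (2 * K ^ (2 * m - 1)) ∧
    ∃ Z : Set G, Z.Finite ∧ ((Z.ncard : ℝ) ≤ K ^ (m - 1)) ∧
      A ^ m ∩ (H : Set G) ⊆ Z * (A ^ 2 ∩ (H : Set G)) := by
  obtain ⟨hAfin, hAsymm, hA1, X, hXfin, hXsymm, hXcard, hXA⟩ := hA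
  have hsq : A ^ 2 ⊆ X * A := by rw [sq]; exact hXA
  have hXpow : ∀ n : ℕ, ((X ^ n).ncard : ℝ) ≤ K ^ n := by
    intro n
    calc ((X ^ n).ncard : ℝ) ≤ ((X.ncard ^ n : ℕ) : ℝ) := by
          exact_mod_cast set_ncard_pow_le n
      _ = (X.ncard : ℝ) ^ n := by push_cast; ring
      _ ≤ K ^ n := pow_le_pow_left₀ (by positivity) hXcard n
  have key : ∀ n : ℕ, n ≠ 0 → ∃ Z : Set G, Z.Finite ∧ ((Z.ncard : ℝ) ≤ K ^ (n - 1)) ∧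
      Z ⊆ A ^ n ∩ (H : Set G) ∧ A ^ n ∩ (H : Set G) ⊆ Z * (A ^ 2 ∩ (H : Set G)) := by
    intro n hn
    have hsub : A ^ n ⊆ X ^ (n - 1) * A :=
      Set.pow_subset_pow_mul_of_sq_subset_mul hsq hn
    obtain ⟨Z, hZfin, hZcard, hZsub, hZcov⟩ :=
      cover_lemma H (set_pow_finite hXfin _) hAsymm n hsub
    exact ⟨Z, hZfin, le_trans (by exact_mod_cast hZcard) (hXpow _), hZsub, hZcov⟩
  have hApow_fin : ∀ n : ℕ, (A ^ n ∩ (H : Set G)).Finite :=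
    fun n => (set_pow_finite hAfin n).inter_of_left _
  have hsymm : ∀ n : ℕ, (A ^ n ∩ (H : Set G))⁻¹ = A ^ n ∩ (H : Set G) := by
    intro n
    rw [Set.inter_inv, ← inv_pow, hAsymm]
    congr 1
    ext x; simp
  constructor
  · refine ⟨hApow_fin m, hsymm m, ⟨Set.one_mem_pow hA1, one_mem H⟩, ?_⟩
    obtain ⟨Z, hZfin, hZcard, hZsub, hZcov⟩ := key (2 * m) (by omega)
    refine ⟨Z ∪ Z⁻¹, hZfin.union hZfin.inv, by ext x; simp [or_comm], ?_, ?_⟩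
    · calc ((Z ∪ Z⁻¹).ncard : ℝ) ≤ Z.ncard + Z⁻¹.ncard := by
            exact_mod_cast Set.ncard_union_le _ _
        _ = 2 * Z.ncard := by rw [Set.ncard_inv]; push_cast; ring
        _ ≤ 2 * K ^ (2 * m - 1) := by linarith
    · intro g hg
      have h1 : g ∈ A ^ (2 * m) ∩ (H : Set G) := by
        obtain ⟨x, ⟨hx1, hx2⟩, y, ⟨hy1, hy2⟩, rfl⟩ := hg
        refine ⟨?_, mul_mem hx2 hy2⟩
        rw [two_mul, pow_add]
        exact Set.mul_mem_mul hx1 hy1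
      obtain ⟨z, hz, w, ⟨hw1, hw2⟩, rfl⟩ := hZcov h1
      exact Set.mul_mem_mul (Set.mem_union_left _ hz)
        ⟨Set.pow_subset_pow_right hA1 hm hw1, hw2⟩
  · obtain ⟨Z, hZfin, hZcard, _, hZcov⟩ := key m (by omega)
    exact ⟨Z, hZfin, hZcard, hZcov⟩
end

section
/- (Converse to the splitting lemma.) Let G be a group with normal subgroup H, and write π : G → G/H for the canonical projection. Suppose that C ⊆ G/H and B₁ ⊆ B₂ ⊆ B₃ ⊆ B₄ ⊆ H are finite symmetric sets containing the identity such that |C³| ≤ K₁|C|, |B₄| ≤ K₂|B₁|, and |B₄⁴| ≤ K₃|B₄|. Suppose further that φ : C³ → G is a map with π(φ(x)) = x for all x ∈ C³, such that φ(x)Bᵢφ(x)⁻¹ ⊆ B_{i+1} and φ(x)⁻¹Bᵢφ(x) ⊆ B_{i+1} for all x ∈ C and i ∈ {1,2,3}, and such that for all x₁,x₂,x₃,x₄ ∈ C³ with x₁x₂x₃x₄ = 1 and all signs ε₁,ε₂,ε₃,ε₄ ∈ {+1,−1}, one has φ(x₁^{ε₁})^{ε₁}φ(x₂^{ε₂})^{ε₂}φ(x₃^{ε₃})^{ε₃}φ(x₄^{ε₄})^{ε₄}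 ∈ B₄. Then |(φ(C)B₁ ∪ B₁φ(C)⁻¹)³| ≤ K₁K₂K₃ · |φ(C)B₁ ∪ B₁φ(C)⁻¹|. -/
open Pointwise

theorem splitting_lemma_converse {G : Type*} [Group G] (H : Subgroup G) [H.Normal]
    (C : Set (G ⧸ H)) (B₁ B₂ B₃ B₄ : Set G)
    (hC : C.Finite) (hCsymm : C⁻¹ = C) (hC1 : (1 : G ⧸ H) ∈ C)
    (hB₁ : B₁.Finite) (hB₂ : B₂.Finite) (hB₃ : B₃.Finite) (hB₄ : B₄.Finite)
    (hB₁symm : B₁⁻¹ = B₁) (hB₂symm : B₂⁻¹ = B₂) (hB₃symm : B₃⁻¹ = B₃) (hB₄symm : B₄⁻¹ = B₄)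
    (hB₁1 : (1 : G) ∈ B₁) (hB₂1 : (1 : G) ∈ B₂) (hB₃1 : (1 : G) ∈ B₃) (hB₄1 : (1 : G) ∈ B₄)
    (hB₁H : B₁ ⊆ (H : Set G)) (h12 : B₁ ⊆ B₂) (h23 : B₂ ⊆ B₃) (h34 : B₃ ⊆ B₄)
    (hB₄H : B₄ ⊆ (H : Set G))
    (K₁ K₂ K₃ : ℝ)
    (hK₁ : ((C ^ 3).ncard : ℝ) ≤ K₁ * C.ncard)
    (hK₂ : (B₄.ncard : ℝ) ≤ K₂ * B₁.ncard)
    (hK₃ : ((B₄ ^ 4).ncard : ℝ) ≤ K₃ * B₄.ncard)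
    (φ : G ⧸ H → G)
    (hφ : ∀ x ∈ C ^ 3, (QuotientGroup.mk (φ x) : G ⧸ H) = x)
    (hconj₁ : ∀ x ∈ C, ∀ b ∈ B₁, φ x * b * (φ x)⁻¹ ∈ B₂ ∧ (φ x)⁻¹ * b * φ x ∈ B₂)
    (hconj₂ : ∀ x ∈ C, ∀ b ∈ B₂, φ x * b * (φ x)⁻¹ ∈ B₃ ∧ (φ x)⁻¹ * b * φ x ∈ B₃)
    (hconj₃ : ∀ x ∈ C, ∀ b ∈ B₃, φ x * b * (φ x)⁻¹ ∈ B₄ ∧ (φ x)⁻¹ * b * φ x ∈ B₄)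
    (hprod : ∀ x₁ x₂ x₃ x₄ : G ⧸ H, x₁ ∈ C ^ 3 → x₂ ∈ C ^ 3 → x₃ ∈ C ^ 3 → x₄ ∈ C ^ 3 →
      x₁ * x₂ * x₃ * x₄ = 1 →
      ∀ ε₁ ε₂ ε₃ ε₄ : ℤ, (ε₁ = 1 ∨ ε₁ = -1) → (ε₂ = 1 ∨ ε₂ = -1) →
        (ε₃ = 1 ∨ ε₃ = -1) → (ε₄ = 1 ∨ ε₄ = -1) →
        (φ (x₁ ^ ε₁)) ^ ε₁ * (φ (x₂ ^ ε₂)) ^ ε₂ * (φ (x₃ ^ ε₃)) ^ ε₃ * (φ (x₄ ^ ε₄)) ^ ε₄ ∈ B₄) :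
    (((φ '' C * B₁ ∪ B₁ * (φ '' C)⁻¹) ^ 3).ncard : ℝ) ≤
      K₁ * K₂ * K₃ * ((φ '' C * B₁ ∪ B₁ * (φ '' C)⁻¹).ncard : ℝ) := by
  set A : Set G := φ '' C * B₁ ∪ B₁ * (φ '' C)⁻¹ with hA
  have h3C : C ^ 3 = C * C * C := by rw [pow_succ, pow_succ, pow_one]
  have hCsub3 : C ⊆ C ^ 3 := by
    intro c hc
    rw [h3C]
    simpa using Set.mul_mem_mul (Set.mul_mem_mul hc hC1) hC1
  have hzpowC : ∀ x ∈ C, ∀ ε : ℤ, (ε = 1 ∨ ε = -1) → x ^ ε ∈ C := by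
    rintro x hx ε (rfl | rfl)
    · simpa using hx
    · rw [zpow_neg_one, ← hCsymm]
      exact Set.inv_mem_inv.2 hx
  have conj : ∀ (Bi Bj : Set G),
      (∀ x ∈ C, ∀ b ∈ Bi, φ x * b * (φ x)⁻¹ ∈ Bj ∧ (φ x)⁻¹ * b * φ x ∈ Bj) →
      ∀ x ∈ C, ∀ ε : ℤ, (ε = 1 ∨ ε = -1) → ∀ b ∈ Bi,
        (φ x) ^ ε * b * ((φ x) ^ ε)⁻¹ ∈ Bj ∧ ((φ x) ^ ε)⁻¹ * b * (φ x) ^ ε ∈ Bj := by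
    rintro Bi Bj h x hx ε (rfl | rfl) b hb
    · exact ⟨by simpa using (h x hx b hb).1, by simpa using (h x hx b hb).2⟩
    · exact ⟨by simpa using (h x hx b hb).2, by simpa using (h x hx b hb).1⟩
  have conj₂' := conj B₂ B₃ hconj₂
  have conj₃' := conj B₃ B₄ hconj₃
  -- every element of A has the form (φ x)^ε * c with c ∈ B₂
  have hAform : ∀ a ∈ A, ∃ x ∈ C, ∃ ε : ℤ, (ε = 1 ∨ ε = -1) ∧ ∃ c ∈ B₂, a = (φ x) ^ ε * c := by
    intro a ha
    rcases ha with ha | ha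
    · rcases Set.mem_mul.1 ha with ⟨u, hu, b, hb, rfl⟩
      rcases hu with ⟨x, hx, rfl⟩
      exact ⟨x, hx, 1, Or.inl rfl, b, h12 hb, by simp⟩
    · rcases Set.mem_mul.1 ha with ⟨b, hb, u, hu, rfl⟩
      rcases hu with ⟨x, hx, hux⟩
      have hu' : (φ x)⁻¹ = u := by rw [hux, inv_inv]
      subst hu'
      exact ⟨x, hx, -1, Or.inr rfl, φ x * b * (φ x)⁻¹, (hconj₁ x hx b hb).1, by group⟩
  -- product of three φ-values lies in φ(C^3) * B₄
  have hφprod : ∀ x₁ ∈ C, ∀ x₂ ∈ C, ∀ x₃ ∈ C, ∀ ε₁ ε₂ ε₃ : ℤ,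
      (ε₁ = 1 ∨ ε₁ = -1) → (ε₂ = 1 ∨ ε₂ = -1) → (ε₃ = 1 ∨ ε₃ = -1) →
      ∃ y ∈ C ^ 3, ∃ b ∈ B₄, (φ x₁) ^ ε₁ * (φ x₂) ^ ε₂ * (φ x₃) ^ ε₃ = φ y * b := by
    intro x₁ hx₁ x₂ hx₂ x₃ hx₃ ε₁ ε₂ ε₃ hε₁ hε₂ hε₃
    set y : G ⧸ H := x₁ ^ ε₁ * x₂ ^ ε₂ * x₃ ^ ε₃ with hy
    have hyC : y ∈ C ^ 3 := by
      rw [h3C]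
      exact Set.mul_mem_mul (Set.mul_mem_mul (hzpowC _ hx₁ _ hε₁) (hzpowC _ hx₂ _ hε₂))
        (hzpowC _ hx₃ _ hε₃)
    have hneg : ∀ ε : ℤ, (ε = 1 ∨ ε = -1) → (-ε = 1 ∨ -ε = -1) := by
      rintro ε (rfl | rfl) <;> simp
    have hyinv : y⁻¹ = x₃ ^ (-ε₃) * x₂ ^ (-ε₂) * x₁ ^ (-ε₁) := by rw [hy]; group
    have hyinvC : y⁻¹ ∈ C ^ 3 := by
      rw [hyinv, h3C]
      exact Set.mul_mem_mul (Set.mul_mem_mul (hzpowC _ hx₃ _ (hneg _ hε₃))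
        (hzpowC _ hx₂ _ (hneg _ hε₂))) (hzpowC _ hx₁ _ (hneg _ hε₁))
    have key := hprod y⁻¹ (x₁ ^ ε₁) (x₂ ^ ε₂) (x₃ ^ ε₃) hyinvC
      (hCsub3 (hzpowC _ hx₁ _ hε₁)) (hCsub3 (hzpowC _ hx₂ _ hε₂))
      (hCsub3 (hzpowC _ hx₃ _ hε₃)) (by rw [hy]; group)
      (-1) ε₁ ε₂ ε₃ (Or.inr rfl) hε₁ hε₂ hε₃
    have hsq : ∀ (z : G ⧸ H) (ε : ℤ), (ε = 1 ∨ ε = -1) → (z ^ ε) ^ ε = z := by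
      rintro z ε (rfl | rfl) <;> simp
    rw [hsq _ _ hε₁, hsq _ _ hε₂, hsq _ _ hε₃] at key
    have hyy : (y⁻¹ : G ⧸ H) ^ (-1 : ℤ) = y := by simp
    rw [hyy, zpow_neg_one] at key
    refine ⟨y, hyC, (φ y)⁻¹ * (φ x₁) ^ ε₁ * (φ x₂) ^ ε₂ * (φ x₃) ^ ε₃, key, by group⟩
  -- the key inclusion
  have hmain : A ^ 3 ⊆ φ '' (C ^ 3) * (B₄ * B₄ * B₄ * B₄) := by
    intro g hg
    have h3A : A ^ 3 = A * A * A := by rw [pow_succ, pow_succ, pow_one]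
    rw [h3A] at hg
    rcases Set.mem_mul.1 hg with ⟨u, hu, a₃, ha₃, rfl⟩
    rcases Set.mem_mul.1 hu with ⟨a₁, ha₁, a₂, ha₂, rfl⟩
    obtain ⟨x₁, hx₁, ε₁, hε₁, c₁, hc₁, rfl⟩ := hAform a₁ ha₁
    obtain ⟨x₂, hx₂, ε₂, hε₂, c₂, hc₂, rfl⟩ := hAform a₂ ha₂
    obtain ⟨x₃, hx₃, ε₃, hε₃, c₃, hc₃, rfl⟩ := hAform a₃ ha₃
    obtain ⟨y, hyC, b, hb, heq⟩ := hφprod x₁ hx₁ x₂ hx₂ x₃ hx₃ ε₁ ε₂ ε₃ hε₁ hε₂ hε₃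
    set P₂ : G := (φ x₂) ^ ε₂ with hP₂
    set P₃ : G := (φ x₃) ^ ε₃ with hP₃
    have hd₁ : P₃⁻¹ * (P₂⁻¹ * c₁ * P₂) * P₃ ∈ B₄ :=
      (conj₃' x₃ hx₃ ε₃ hε₃ _ (conj₂' x₂ hx₂ ε₂ hε₂ c₁ hc₁).2).2
    have hd₂ : P₃⁻¹ * c₂ * P₃ ∈ B₄ := (conj₃' x₃ hx₃ ε₃ hε₃ c₂ (h23 hc₂)).2
    refine ⟨φ y, Set.mem_image_of_mem φ hyC,
      b * (P₃⁻¹ * (P₂⁻¹ * c₁ * P₂) * P₃) * (P₃⁻¹ * c₂ * P₃) * c₃,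
      Set.mul_mem_mul (Set.mul_mem_mul (Set.mul_mem_mul hb hd₁) hd₂) (h34 (h23 hc₃)), ?_⟩
    show φ y * (b * (P₃⁻¹ * (P₂⁻¹ * c₁ * P₂) * P₃) * (P₃⁻¹ * c₂ * P₃) * c₃) =
      (φ x₁) ^ ε₁ * c₁ * (P₂ * c₂) * (P₃ * c₃)
    calc φ y * (b * (P₃⁻¹ * (P₂⁻¹ * c₁ * P₂) * P₃) * (P₃⁻¹ * c₂ * P₃) * c₃)
        = (φ y * b) * ((P₃⁻¹ * (P₂⁻¹ * c₁ * P₂) * P₃) * (P₃⁻¹ * c₂ * P₃) * c₃) := by group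
      _ = ((φ x₁) ^ ε₁ * P₂ * P₃) * ((P₃⁻¹ * (P₂⁻¹ * c₁ * P₂) * P₃) * (P₃⁻¹ * c₂ * P₃) * c₃) := by
          rw [heq]
      _ = (φ x₁) ^ ε₁ * c₁ * (P₂ * c₂) * (P₃ * c₃) := by group
  -- finiteness
  have hφCfin : (φ '' C).Finite := hC.image φ
  have hAfin : A.Finite := (hφCfin.mul hB₁).union (hB₁.mul hφCfin.inv)
  have hC3fin : (C ^ 3).Finite := by rw [h3C]; exact (hC.mul hC).mul hC
  have hB44fin : (B₄ * B₄ * B₄ * B₄).Finite := ((hB₄.mul hB₄).mul hB₄).mul hB₄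
  have hA3fin : (A ^ 3).Finite := by
    rw [pow_succ, pow_succ, pow_one]; exact (hAfin.mul hAfin).mul hAfin
  have mul_card : ∀ S T : Set G, (S * T).ncard ≤ S.ncard * T.ncard := by
    intro S T
    have h := Set.natCard_mul_le (s := S) (t := T)
    rwa [Nat.card_coe_set_eq, Nat.card_coe_set_eq, Nat.card_coe_set_eq] at h
  -- nat-level cardinality bound on A^3
  have nat1 : (A ^ 3).ncard ≤ (C ^ 3).ncard * (B₄ ^ 4).ncard := by
    have h4 : B₄ ^ 4 = B₄ * B₄ * B₄ * B₄ := by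
      rw [pow_succ, pow_succ, pow_succ, pow_one]
    calc (A ^ 3).ncard ≤ (φ '' (C ^ 3) * (B₄ * B₄ * B₄ * B₄)).ncard :=
          Set.ncard_le_ncard hmain ((hC3fin.image φ).mul hB44fin)
      _ ≤ (φ '' (C ^ 3)).ncard * (B₄ * B₄ * B₄ * B₄).ncard := mul_card _ _
      _ ≤ (C ^ 3).ncard * (B₄ ^ 4).ncard := by
          rw [h4]
          exact Nat.mul_le_mul_right _ (Set.ncard_image_le hC3fin)
  -- lower bound: |C| * |B₁| ≤ |A|
  have hprodcard : (C ×ˢ B₁).ncard = C.ncard * B₁.ncard := by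
    rw [← Nat.card_coe_set_eq, Nat.card_congr (Equiv.Set.prod C B₁), Nat.card_prod,
      Nat.card_coe_set_eq, Nat.card_coe_set_eq]
  have nat2 : C.ncard * B₁.ncard ≤ A.ncard := by
    rw [← hprodcard]
    refine Set.ncard_le_ncard_of_injOn (fun p => φ p.1 * p.2) ?_ ?_ hAfin
    · rintro ⟨x, b⟩ hp
      rw [Set.mem_prod] at hp
      exact Or.inl (Set.mul_mem_mul (Set.mem_image_of_mem φ hp.1) hp.2)
    · rintro ⟨x, b⟩ hp ⟨x', b'⟩ hp' hEq
      have hEq' : φ x * b = φ x' * b' := hEq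
      rw [Set.mem_prod] at hp hp'
      have hxq : ∀ z ∈ C, ∀ c ∈ B₁, (QuotientGroup.mk (φ z * c) : G ⧸ H) = z := by
        intro z hz c hc
        have h1 : (QuotientGroup.mk c : G ⧸ H) = 1 := (QuotientGroup.eq_one_iff c).2 (hB₁H hc)
        rw [QuotientGroup.mk_mul, h1, mul_one, hφ z (hCsub3 hz)]
      have hx : x = x' := by
        have := hxq x hp.1 b hp.2
        rw [hEq', hxq x' hp'.1 b' hp'.2] at this
        exact this.symm
      subst hx
      have hb : b = b' := mul_left_cancel hEq'
      simp [hb]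
  -- positivity facts
  have hCpos : 0 < C.ncard := (Set.ncard_pos hC).2 ⟨1, hC1⟩
  have hB₁pos : 0 < B₁.ncard := (Set.ncard_pos hB₁).2 ⟨1, hB₁1⟩
  have hB₄pos : 0 < B₄.ncard := (Set.ncard_pos hB₄).2 ⟨1, hB₄1⟩
  have hC3pos : 0 < (C ^ 3).ncard := (Set.ncard_pos hC3fin).2 ⟨1, hCsub3 hC1⟩
  have hcR : (0 : ℝ) < C.ncard := by exact_mod_cast hCpos
  have hb1R : (0 : ℝ) < B₁.ncard := by exact_mod_cast hB₁pos
  have hb4R : (0 : ℝ) < B₄.ncard := by exact_mod_cast hB₄pos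
  have hc3R : (0 : ℝ) < (C ^ 3).ncard := by exact_mod_cast hC3pos
  have hB44fin' : (B₄ ^ 4).Finite := by
    rw [pow_succ, pow_succ, pow_succ, pow_one]; exact hB44fin
  have hB44pos : 0 < (B₄ ^ 4).ncard := by
    refine (Set.ncard_pos hB44fin').2 ⟨1, ?_⟩
    rw [pow_succ, pow_succ, pow_succ, pow_one]
    simpa using Set.mul_mem_mul (Set.mul_mem_mul (Set.mul_mem_mul hB₄1 hB₄1) hB₄1) hB₄1
  have hb44R : (0 : ℝ) < (B₄ ^ 4).ncard := by exact_mod_cast hB44pos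
  have hK₁pos : 0 < K₁ := by
    by_contra h
    push_neg at h
    nlinarith [mul_nonpos_of_nonpos_of_nonneg h hcR.le]
  have hK₂pos : 0 < K₂ := by
    by_contra h
    push_neg at h
    nlinarith [mul_nonpos_of_nonpos_of_nonneg h hb1R.le]
  have hK₃pos : 0 < K₃ := by
    by_contra h
    push_neg at h
    nlinarith [mul_nonpos_of_nonpos_of_nonneg h hb4R.le]
  have f1 : ((A ^ 3).ncard : ℝ) ≤ ((C ^ 3).ncard : ℝ) * ((B₄ ^ 4).ncard : ℝ) := by
    exact_mod_cast nat1
  have f2 : (C.ncard : ℝ) * (B₁.ncard : ℝ) ≤ (A.ncard : ℝ) := by exact_mod_cast nat2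
  have hb44nn : (0 : ℝ) ≤ ((B₄ ^ 4).ncard : ℝ) := by positivity
  calc ((A ^ 3).ncard : ℝ) ≤ ((C ^ 3).ncard : ℝ) * ((B₄ ^ 4).ncard : ℝ) := f1
    _ ≤ (K₁ * C.ncard) * (K₃ * B₄.ncard) :=
        mul_le_mul hK₁ hK₃ hb44nn (by positivity)
    _ ≤ (K₁ * C.ncard) * (K₃ * (K₂ * B₁.ncard)) := by
        apply mul_le_mul_of_nonneg_left _ (by positivity)
        exact mul_le_mul_of_nonneg_left hK₂ hK₃pos.le
    _ = (K₁ * K₂ * K₃) * ((C.ncard : ℝ) * B₁.ncard) := by ring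
    _ ≤ K₁ * K₂ * K₃ * (A.ncard : ℝ) :=
        mul_le_mul_of_nonneg_left f2 (by positivity)
end
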